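/- Every Fermi ellipsoid contains the corresponding quantum blob: for all real symmetric n×n matrices X, Y with X positive definite, {z ∈ ℝ^{2n} : Gz·z ≤ ℏ} ⊆ {z ∈ ℝ^{2n} : M_{XY} z·z ≤ ℏ Tr X}, where G = [[X + Y X⁻¹ Y, Y X⁻¹],[X⁻¹ Y, X⁻¹]] and M_{XY} = [[X² + Y², Y],[Y, I]]. -/

import Mathlib

/-!
Write `P = [1 0]` and `Q = [X⁻¹Y X⁻¹]`. The congruence `S ↦ PᵀSP + QᵀSQ` sends `X` to the
covariance matrix `G` and `X²` to the Fermi matrix `M_{XY}`, and it is monotone for the Loewner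
order. Since the eigenvalues of `X` lie in `[0, Tr X]`, `X² ≤ (Tr X) X`; hence
`M_{XY} ≤ (Tr X) G`, and `M_{XY} z·z ≤ Tr X · Gz·z ≤ ℏ Tr X` on the quantum blob.
-/

open Matrix
open scoped ComplexOrder MatrixOrder

theorem Matrix.PosSemidef.mul_self_le_trace_smul {𝕜 m : Type*} [RCLike 𝕜] [Fintype m]
    {X : Matrix m m 𝕜} (hX : X.PosSemidef) : X * X ≤ X.trace • X := by
  classical
  have hd : ∀ i, 0 ≤ hX.1.eigenvalues i := hX.eigenvalues_nonneg
  have htrace := hX.1.trace_eq_sum_eigenvalues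
  have hspec := hX.1.spectral_theorem
  generalize hX.1.eigenvalues = d at hd htrace hspec
  generalize hX.1.eigenvectorUnitary = U at hspec
  have hdiag : X.trace • X - X * X = Unitary.conjStarAlgAut 𝕜 _ U
      (diagonal fun i ↦ (((∑ j, d j) * d i - d i * d i : ℝ) : 𝕜)) := by
    rw [htrace, hspec, ← map_mul, ← map_smul, ← map_sub, diagonal_mul_diagonal, ← diagonal_smul,
      diagonal_sub]
    congr 2
    ext i
    simp
  rw [le_iff, hdiag, Unitary.conjStarAlgAut_apply,
    Unitary.isUnit_coe.posSemidef_star_right_conjugate_iff, posSemidef_diagonal_iff]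
  intro i
  have hle : d i ≤ ∑ j, d j := Finset.single_le_sum (fun j _ ↦ hd j) (Finset.mem_univ i)
  exact RCLike.ofReal_nonneg.mpr (by nlinarith [hd i])

theorem Matrix.dotProduct_mulVec_le_of_le {𝕜 m : Type*} [RCLike 𝕜] [Fintype m]
    {A B : Matrix m m 𝕜} (h : A ≤ B) (z : m → 𝕜) : star z ⬝ᵥ A *ᵥ z ≤ star z ⬝ᵥ B *ᵥ z := by
  simpa [sub_mulVec, dotProduct_sub] using h.dotProduct_mulVec_nonneg z

theorem Matrix.transpose_fromCols_mul_mul_fromCols {R l m n : Type*} [CommRing R] [Fintype l]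
    (A : Matrix l m R) (B : Matrix l n R) (S : Matrix l l R) :
    (fromCols A B)ᵀ * S * fromCols A B =
      fromBlocks (Aᵀ * S * A) (Aᵀ * S * B) (Bᵀ * S * A) (Bᵀ * S * B) := by
  rw [transpose_fromCols, fromRows_mul, fromRows_mul_fromCols]

noncomputable section

section CommRing

variable {m R : Type*} [Fintype m] [DecidableEq m] [CommRing R]

def covarianceMatrix (X Y : Matrix m m R) : Matrix (m ⊕ m) (m ⊕ m) R :=
  fromBlocks (X + Y * X⁻¹ * Y) (Y * X⁻¹) (X⁻¹ * Y) X⁻¹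

def fermiMatrix (X Y : Matrix m m R) : Matrix (m ⊕ m) (m ⊕ m) R :=
  fromBlocks (X * X + Y * Y) Y Y 1

def phaseSpaceCongr (X Y S : Matrix m m R) : Matrix (m ⊕ m) (m ⊕ m) R :=
  (fromCols (1 : Matrix m m R) 0)ᵀ * S * fromCols (1 : Matrix m m R) 0 +
    (fromCols (X⁻¹ * Y) X⁻¹)ᵀ * S * fromCols (X⁻¹ * Y) X⁻¹

variable {X Y S T : Matrix m m R}

theorem phaseSpaceCongr_eq_fromBlocks (hX : X.IsSymm) (hY : Y.IsSymm) (S : Matrix m m R) :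
    phaseSpaceCongr X Y S =
      fromBlocks (S + Y * X⁻¹ * S * X⁻¹ * Y) (Y * X⁻¹ * S * X⁻¹) (X⁻¹ * S * X⁻¹ * Y)
        (X⁻¹ * S * X⁻¹) := by
  rw [phaseSpaceCongr, transpose_fromCols_mul_mul_fromCols, transpose_fromCols_mul_mul_fromCols,
    fromBlocks_add, transpose_mul, transpose_nonsing_inv, hX.eq, hY.eq]
  simp only [transpose_one, transpose_zero, Matrix.one_mul, Matrix.mul_one, Matrix.mul_zero,
    Matrix.zero_mul, zero_add, Matrix.mul_assoc]

theorem phaseSpaceCongr_self (hX : X.IsSymm) (hY : Y.IsSymm) (hdet : IsUnit X.det) :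
    phaseSpaceCongr X Y X = covarianceMatrix X Y := by
  simp [phaseSpaceCongr_eq_fromBlocks hX hY, covarianceMatrix, Matrix.mul_assoc, hdet]

theorem phaseSpaceCongr_mul_self (hX : X.IsSymm) (hY : Y.IsSymm) (hdet : IsUnit X.det) :
    phaseSpaceCongr X Y (X * X) = fermiMatrix X Y := by
  simp [phaseSpaceCongr_eq_fromBlocks hX hY, fermiMatrix, Matrix.mul_assoc, hdet]

theorem phaseSpaceCongr_smul (c : R) :
    phaseSpaceCongr X Y (c • S) = c • phaseSpaceCongr X Y S := by
  simp only [phaseSpaceCongr, Matrix.mul_smul, Matrix.smul_mul, smul_add]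

theorem phaseSpaceCongr_sub :
    phaseSpaceCongr X Y (T - S) = phaseSpaceCongr X Y T - phaseSpaceCongr X Y S := by
  simp only [phaseSpaceCongr, Matrix.mul_sub, Matrix.sub_mul]
  abel

end CommRing

section Real

variable {m : Type*} [Fintype m] [DecidableEq m] {X Y S T : Matrix m m ℝ}

theorem phaseSpaceCongr_mono (h : S ≤ T) : phaseSpaceCongr X Y S ≤ phaseSpaceCongr X Y T := by
  rw [le_iff, ← phaseSpaceCongr_sub, phaseSpaceCongr, ← conjTranspose_eq_transpose_of_trivial,
    ← conjTranspose_eq_transpose_of_trivial]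
  exact (h.conjTranspose_mul_mul_same _).add (h.conjTranspose_mul_mul_same _)

theorem fermiMatrix_le_trace_smul_covarianceMatrix (hX : X.PosDef) (hY : Y.IsSymm) :
    fermiMatrix X Y ≤ X.trace • covarianceMatrix X Y := by
  have hXs : X.IsSymm := isHermitian_iff_isSymm.mp hX.isHermitian
  have hdet : IsUnit X.det := (isUnit_iff_isUnit_det X).mp hX.isUnit
  rw [← phaseSpaceCongr_self hXs hY hdet, ← phaseSpaceCongr_mul_self hXs hY hdet,
    ← phaseSpaceCongr_smul]
  exact phaseSpaceCongr_mono hX.posSemidef.mul_self_le_trace_smul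

end Real

end

theorem covariance_ellipsoid_subset_fermi_ellipsoid_general
    (n : ℕ) (ℏ : ℝ)
    (X Y : Matrix (Fin n) (Fin n) ℝ)
    (hY : Y.IsSymm) (hXpd : X.PosDef) :
    {z : Fin n ⊕ Fin n → ℝ |
        z ⬝ᵥ (fromBlocks (X + Y * X⁻¹ * Y) (Y * X⁻¹) (X⁻¹ * Y) X⁻¹).mulVec z ≤ ℏ} ⊆
      {z : Fin n ⊕ Fin n → ℝ |
        z ⬝ᵥ (fromBlocks (X * X + Y * Y) Y Y 1).mulVec z ≤ ℏ * X.trace} := by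
  intro z (hz : z ⬝ᵥ covarianceMatrix X Y *ᵥ z ≤ ℏ)
  have hle := dotProduct_mulVec_le_of_le (fermiMatrix_le_trace_smul_covarianceMatrix hXpd hY) z
  rw [star_trivial, smul_mulVec, dotProduct_smul, smul_eq_mul] at hle
  calc z ⬝ᵥ fermiMatrix X Y *ᵥ z ≤ X.trace * (z ⬝ᵥ covarianceMatrix X Y *ᵥ z) := hle
    _ ≤ X.trace * ℏ := mul_le_mul_of_nonneg_left hz hXpd.posSemidef.trace_nonneg
    _ = ℏ * X.trace := mul_comm _ _

/-- Every Fermi ellipsoid contains the corresponding quantum blob: the Wigner covariance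
ellipsoid `{z : Gz·z ≤ ℏ}` of `ψ_{X,Y}` is contained in its Fermi ellipsoid
`{z : M_{XY} z·z ≤ ℏ Tr X}`. -/
theorem covariance_ellipsoid_subset_fermi_ellipsoid
    (n : ℕ) (hn : 1 ≤ n) (ℏ : ℝ) (hℏ : 0 < ℏ)
    (X Y : Matrix (Fin n) (Fin n) ℝ)
    (hX : X.IsSymm) (hY : Y.IsSymm) (hXpd : X.PosDef) :
    {z : Fin n ⊕ Fin n → ℝ |
        z ⬝ᵥ (fromBlocks (X + Y * X⁻¹ * Y) (Y * X⁻¹) (X⁻¹ * Y) X⁻¹).mulVec z ≤ ℏ} ⊆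
      {z : Fin n ⊕ Fin n → ℝ |
        z ⬝ᵥ (fromBlocks (X * X + Y * Y) Y Y 1).mulVec z ≤ ℏ * X.trace} :=
  covariance_ellipsoid_subset_fermi_ellipsoid_general n ℏ X Y hY hXpd
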